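/- arXiv:2310.08896 — 4 statements merged into one kernel-verified Lean document; each statement's English description precedes it below -/
import Mathlib

section
/- Let f : 2^N → ℝ be a submodular set function. For any X, C ⊆ N, let T₁,…,T_t be a collection of subsets of C \ X such that each element of C \ X appears in exactly k of these subsets. Then ∑_{j=1}^t (f(X ∪ T_j) − f(X)) ≥ k·(f(X ∪ C) − f(X)). -/
lemma stmt_0_aux {N : Type*} [DecidableEq N] (f : Finset N → ℝ)
    (hsub : ∀ X Y : Finset N, X ⊆ Y → ∀ e ∉ Y,
      f (insert e Y) - f Y ≤ f (insert e X) - f X)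
    (X : Finset N) : ∀ (D : Finset N), Disjoint D X →
    ∀ (t k : ℕ) (T : ℕ → Finset N), (∀ j < t, T j ⊆ D) →
      (∀ e ∈ D, ((Finset.range t).filter fun j => e ∈ T j).card = k) →
      (k : ℝ) * (f (X ∪ D) - f X) ≤ ∑ j ∈ Finset.range t, (f (X ∪ T j) - f X) := by
  intro D
  induction D using Finset.induction_on with
  | empty =>
    intro _ t k T hT hc
    have hz : ∀ j ∈ Finset.range t, f (X ∪ T j) - f X = 0 := by
      intro j hj
      have : T j = ∅ := Finset.subset_empty.mp (hT j (Finset.mem_range.mp hj))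
      simp [this]
    rw [Finset.sum_congr rfl hz]
    simp
  | @insert e D' he ih =>
    intro hD t k T hT hc
    have heX : e ∉ X := fun h => Finset.disjoint_left.mp hD (Finset.mem_insert_self e D') h
    have heD'X : e ∉ X ∪ D' := by simp [he, heX]
    have hD' : Disjoint D' X := hD.mono_left (Finset.subset_insert e D')
    set T' : ℕ → Finset N := fun j => T j \ {e} with hT'def
    have hT'sub : ∀ j < t, T' j ⊆ D' := by
      intro j hj x hx
      simp only [hT'def, Finset.mem_sdiff, Finset.mem_singleton] at hx
      rcases Finset.mem_insert.mp (hT j hj hx.1) with h | h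
      · exact absurd h hx.2
      · exact h
    have hc' : ∀ e' ∈ D', ((Finset.range t).filter fun j => e' ∈ T' j).card = k := by
      intro e' he'
      have hne : e' ≠ e := fun h => he (h ▸ he')
      rw [← hc e' (Finset.mem_insert_of_mem he')]
      congr 1
      apply Finset.filter_congr
      intro j _
      simp [hT'def, hne]
    have hIH := ih hD' t k T' hT'sub hc'
    set m : ℝ := f (insert e (X ∪ D')) - f (X ∪ D') with hm
    have hsplit : ∑ j ∈ Finset.range t, (f (X ∪ T j) - f X)
        = (∑ j ∈ Finset.range t, (f (X ∪ T' j) - f X))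
          + ∑ j ∈ Finset.range t, (f (X ∪ T j) - f (X ∪ T' j)) := by
      rw [← Finset.sum_add_distrib]
      apply Finset.sum_congr rfl
      intro j _; ring
    have hB : (k : ℝ) * m ≤ ∑ j ∈ Finset.range t, (f (X ∪ T j) - f (X ∪ T' j)) := by
      rw [← Finset.sum_filter_add_sum_filter_not (Finset.range t) (fun j => e ∈ T j)]
      have h2 : ∑ j ∈ (Finset.range t).filter (fun j => ¬ e ∈ T j),
          (f (X ∪ T j) - f (X ∪ T' j)) = 0 := by
        apply Finset.sum_eq_zero
        intro j hj
        have : e ∉ T j := (Finset.mem_filter.mp hj).2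
        have : T' j = T j := by
          simp [hT'def, Finset.sdiff_eq_self_iff_disjoint, Finset.disjoint_singleton_right, this]
        rw [this]; ring
      rw [h2, add_zero]
      have h1 : ∀ j ∈ (Finset.range t).filter (fun j => e ∈ T j),
          m ≤ f (X ∪ T j) - f (X ∪ T' j) := by
        intro j hj
        obtain ⟨hjr, hjT⟩ := Finset.mem_filter.mp hj
        have hTj : X ∪ T j = insert e (X ∪ T' j) := by
          rw [hT'def]
          simp only [Finset.sdiff_singleton_eq_erase]
          rw [← Finset.union_insert, Finset.insert_erase hjT]
        rw [hTj, hm]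
        exact hsub (X ∪ T' j) (X ∪ D')
          (Finset.union_subset_union_right (hT'sub j (Finset.mem_range.mp hjr))) e heD'X
      calc (k : ℝ) * m = ((Finset.range t).filter (fun j => e ∈ T j)).card * m := by
            rw [hc e (Finset.mem_insert_self e D')]
        _ = ∑ _j ∈ (Finset.range t).filter (fun j => e ∈ T j), m := by
            rw [Finset.sum_const, nsmul_eq_mul]
        _ ≤ _ := Finset.sum_le_sum h1
    have hunion : X ∪ insert e D' = insert e (X ∪ D') := Finset.union_insert e X D'
    rw [hsplit, hunion]
    have : (k : ℝ) * (f (insert e (X ∪ D')) - f X)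
        = (k : ℝ) * (f (X ∪ D') - f X) + (k : ℝ) * m := by rw [hm]; ring
    linarith

/-- Lemma 1.1 of Lee et al.: for a submodular `f`, if each element of `C \ X`
appears in exactly `k` of the sets `T j ⊆ C \ X`, then
`∑ j (f(X ∪ T j) − f X) ≥ k (f(X ∪ C) − f X)`. -/
theorem stmt_0 {N : Type*} [DecidableEq N] (f : Finset N → ℝ)
    (hsub : ∀ X Y : Finset N, X ⊆ Y → ∀ e ∉ Y,
      f (insert e Y) - f Y ≤ f (insert e X) - f X)
    (X C : Finset N) (t k : ℕ) (T : ℕ → Finset N)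
    (hT : ∀ j < t, T j ⊆ C \ X)
    (hcount : ∀ e ∈ C \ X, ((Finset.range t).filter fun j => e ∈ T j).card = k) :
    (k : ℝ) * (f (X ∪ C) - f X) ≤ ∑ j ∈ Finset.range t, (f (X ∪ T j) - f X) := by
  have h := stmt_0_aux f hsub X (C \ X) Finset.sdiff_disjoint t k T hT hcount
  rwa [Finset.union_sdiff_self_eq_union] at h
end

section
/- Let f : 2^N → ℝ be a submodular set function. For any X' ⊆ X ⊆ N, let T₁,…,T_t be a collection of subsets of X \ X' such that each element of X \ X' appears in exactly k of these subsets. Then ∑_{j=1}^t (f(X) − f(X \ T_j)) ≤ k·(f(X) − f(X')). -/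
/-- Lemma 1.2 of Lee et al.: for a submodular `f`, if each element of `X \ X'`
appears in exactly `k` of the sets `T j ⊆ X \ X'`, then
`∑ j (f X − f(X \ T j)) ≤ k (f X − f X')`. -/
theorem stmt_1 {N : Type*} [DecidableEq N] (f : Finset N → ℝ)
    (hsub : ∀ X Y : Finset N, X ⊆ Y → ∀ e ∉ Y,
      f (insert e Y) - f Y ≤ f (insert e X) - f X)
    (X' X : Finset N) (hXX : X' ⊆ X) (t k : ℕ) (T : ℕ → Finset N)
    (hT : ∀ j < t, T j ⊆ X \ X')
    (hcount : ∀ e ∈ X \ X', ((Finset.range t).filter fun j => e ∈ T j).card = k) :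
    ∑ j ∈ Finset.range t, (f X - f (X \ T j)) ≤ (k : ℝ) * (f X - f X') := by
  suffices H : ∀ n (X' : Finset N) (T : ℕ → Finset N), (X \ X').card = n → X' ⊆ X →
      (∀ j < t, T j ⊆ X \ X') →
      (∀ e ∈ X \ X', ((Finset.range t).filter fun j => e ∈ T j).card = k) →
      ∑ j ∈ Finset.range t, (f X - f (X \ T j)) ≤ (k : ℝ) * (f X - f X') by
    exact H _ X' T rfl hXX hT hcount
  intro n
  induction n with
  | zero =>
    intro X' T hn hXX hT hcount
    have hempty : X \ X' = ∅ := Finset.card_eq_zero.mp hn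
    have hX : X' = X := by
      apply Finset.Subset.antisymm hXX
      intro x hx
      by_contra hx'
      have : x ∈ X \ X' := Finset.mem_sdiff.mpr ⟨hx, hx'⟩
      rw [hempty] at this
      exact absurd this (Finset.notMem_empty x)
    have hz : ∀ j ∈ Finset.range t, f X - f (X \ T j) = 0 := by
      intro j hj
      have hTj : T j ⊆ ∅ := by
        have := hT j (Finset.mem_range.mp hj)
        rwa [hempty] at this
      have : T j = ∅ := Finset.subset_empty.mp hTj
      simp [this]
    rw [Finset.sum_congr rfl hz]
    simp [hX]
  | succ n ih =>
    intro X' T hn hXX hT hcount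
    obtain ⟨e, he⟩ : (X \ X').Nonempty := Finset.card_pos.mp (by omega)
    have heX : e ∈ X := (Finset.mem_sdiff.mp he).1
    have heX' : e ∉ X' := (Finset.mem_sdiff.mp he).2
    set X'' := insert e X' with hX''
    have hXX'' : X'' ⊆ X := Finset.insert_subset heX hXX
    have hcard : (X \ X'').card = n := by
      have hset : X \ X'' = (X \ X').erase e := by
        ext x
        simp only [Finset.mem_sdiff, hX'', Finset.mem_insert, Finset.mem_erase]
        tauto
      rw [hset, Finset.card_erase_of_mem he, hn]
      omega
    have hT' : ∀ j < t, (T j).erase e ⊆ X \ X'' := by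
      intro j hj x hx
      have hxe : x ≠ e := Finset.ne_of_mem_erase hx
      have hxT : x ∈ T j := Finset.mem_of_mem_erase hx
      have hx' := hT j hj hxT
      simp only [Finset.mem_sdiff, hX'', Finset.mem_insert] at hx' ⊢
      tauto
    have hcount' : ∀ e' ∈ X \ X'',
        ((Finset.range t).filter fun j => e' ∈ (T j).erase e).card = k := by
      intro e' he'
      have he'1 : e' ∈ X \ X' := by
        simp only [Finset.mem_sdiff, hX'', Finset.mem_insert] at he' ⊢
        tauto
      have he'e : e' ≠ e := by
        simp only [Finset.mem_sdiff, hX'', Finset.mem_insert] at he'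
        tauto
      rw [← hcount e' he'1]
      congr 1
      apply Finset.filter_congr
      intro j _
      simp [Finset.mem_erase, he'e]
    have IH := ih X'' (fun j => (T j).erase e) hcard hXX'' hT' hcount'
    have key : ∀ j ∈ Finset.range t,
        f X - f (X \ T j)
          = (f X - f (X \ (T j).erase e)) + (f (X \ (T j).erase e) - f (X \ T j)) := by
      intro j _; ring
    rw [Finset.sum_congr rfl key, Finset.sum_add_distrib]
    have h2 : ∑ j ∈ Finset.range t, (f (X \ (T j).erase e) - f (X \ T j))
        ≤ (k : ℝ) * (f X'' - f X') := by
      have hsplit := Finset.sum_filter_add_sum_filter_not (Finset.range t)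
        (fun j => e ∈ T j) (fun j => f (X \ (T j).erase e) - f (X \ T j))
      have hzero : ∑ j ∈ (Finset.range t).filter (fun j => ¬ e ∈ T j),
          (f (X \ (T j).erase e) - f (X \ T j)) = 0 := by
        apply Finset.sum_eq_zero
        intro j hj
        have hne : e ∉ T j := (Finset.mem_filter.mp hj).2
        rw [Finset.erase_eq_of_notMem hne]
        ring
      have hbound : ∀ j ∈ (Finset.range t).filter (fun j => e ∈ T j),
          f (X \ (T j).erase e) - f (X \ T j) ≤ f X'' - f X' := by
        intro j hj
        have hjt : j < t := Finset.mem_range.mp (Finset.mem_filter.mp hj).1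
        have heT : e ∈ T j := (Finset.mem_filter.mp hj).2
        have hset : X \ (T j).erase e = insert e (X \ T j) := by
          ext x
          simp only [Finset.mem_sdiff, Finset.mem_erase, Finset.mem_insert]
          constructor
          · rintro ⟨hx, hx'⟩
            by_cases hxe : x = e
            · exact Or.inl hxe
            · exact Or.inr ⟨hx, fun h => hx' ⟨hxe, h⟩⟩
          · rintro (rfl | ⟨hx, hx'⟩)
            · exact ⟨heX, fun h => h.1 rfl⟩
            · exact ⟨hx, fun h => hx' h.2⟩
        have hsubXT : X' ⊆ X \ T j := by
          intro x hx
          refine Finset.mem_sdiff.mpr ⟨hXX hx, fun hxT => ?_⟩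
          have := hT j hjt hxT
          exact (Finset.mem_sdiff.mp this).2 hx
        have heXT : e ∉ X \ T j := fun h => (Finset.mem_sdiff.mp h).2 heT
        have := hsub X' (X \ T j) hsubXT e heXT
        rw [hset]
        calc f (insert e (X \ T j)) - f (X \ T j)
            ≤ f (insert e X') - f X' := this
          _ = f X'' - f X' := by rw [hX'']
      calc ∑ j ∈ Finset.range t, (f (X \ (T j).erase e) - f (X \ T j))
          = ∑ j ∈ (Finset.range t).filter (fun j => e ∈ T j),
              (f (X \ (T j).erase e) - f (X \ T j)) := by
            rw [← hsplit, hzero, add_zero]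
        _ ≤ ((Finset.range t).filter (fun j => e ∈ T j)).card • (f X'' - f X') :=
            Finset.sum_le_card_nsmul _ _ _ hbound
        _ = (k : ℝ) * (f X'' - f X') := by
            rw [hcount e he, nsmul_eq_mul]
    have hring : (k : ℝ) * (f X - f X'') + (k : ℝ) * (f X'' - f X')
        = (k : ℝ) * (f X - f X') := by ring
    linarith [IH, h2]
end

section
/- Let f be monotone submodular with f(∅)=0, and f̂ ε-approximately submodular with respect to f for 0 ≤ ε < 1. Suppose X and C are subsets of N, and {W_j}_{j=1}^t, {Λ_j}_{j=1}^t are collections with W_j ⊆ C\X, Λ_j ⊆ X\C, such that each element of C\X appears in exactly m of the W_j, each element e of X\C appears in n_e ≤ (k+1/p−1)·m of the Λ_j, t ≤ r·m, and for each j, f̂((X\Λ_j) ∪ W_j) ≤ (1+δ)·f̂(X). Then (k + 1/p + 2εr/(1−ε) + (1+ε)δr/(1−ε)) · f(X) ≥ f(X ∪ C) + (k + 1/p − 1)·f(X ∩ C). -/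
section AuxSubmod

variable {N : Type*} [DecidableEq N] (f : Finset N → ℝ)

/-- Diminishing returns, including degenerate cases. -/
lemma stmt4_hsub'
    (hmono : ∀ X Y : Finset N, X ⊆ Y → f X ≤ f Y)
    (hsub : ∀ X Y : Finset N, X ⊆ Y → ∀ e ∉ Y,
      f (insert e Y) - f Y ≤ f (insert e X) - f X)
    (S T : Finset N) (hST : S ⊆ T) (e : N) :
    f (insert e T) - f T ≤ f (insert e S) - f S := by
  by_cases heT : e ∈ T
  · rw [Finset.insert_eq_self.2 heT]
    have := hmono S (insert e S) (Finset.subset_insert e S)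
    linarith
  · exact hsub S T hST e heT

lemma stmt4_marg_sub
    (hmono : ∀ X Y : Finset N, X ⊆ Y → f X ≤ f Y)
    (hsub : ∀ X Y : Finset N, X ⊆ Y → ∀ e ∉ Y,
      f (insert e Y) - f Y ≤ f (insert e X) - f X)
    (S T U : Finset N) (hST : S ⊆ T) :
    f (T ∪ U) - f T ≤ f (S ∪ U) - f S := by
  induction U using Finset.induction_on with
  | empty => simp
  | @insert a U ha ih =>
    have h1 : f (insert a (T ∪ U)) - f (T ∪ U) ≤ f (insert a (S ∪ U)) - f (S ∪ U) :=
      stmt4_hsub' f hmono hsub (S ∪ U) (T ∪ U)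
        (Finset.union_subset_union hST (Finset.Subset.refl U)) a
    rw [Finset.union_insert, Finset.union_insert]
    linarith

/-- Full submodularity. -/
lemma stmt4_sub2
    (hmono : ∀ X Y : Finset N, X ⊆ Y → f X ≤ f Y)
    (hsub : ∀ X Y : Finset N, X ⊆ Y → ∀ e ∉ Y,
      f (insert e Y) - f Y ≤ f (insert e X) - f X)
    (A B : Finset N) :
    f (A ∪ B) + f (A ∩ B) ≤ f A + f B := by
  have h := stmt4_marg_sub f hmono hsub (A ∩ B) A B Finset.inter_subset_left
  rw [Finset.union_eq_right.2 Finset.inter_subset_right] at h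
  linarith

lemma stmt4_lemA
    (hmono : ∀ X Y : Finset N, X ⊆ Y → f X ≤ f Y)
    (hsub : ∀ X Y : Finset N, X ⊆ Y → ∀ e ∉ Y,
      f (insert e Y) - f Y ≤ f (insert e X) - f X)
    (X : Finset N) (t m : ℕ) :
    ∀ (D : Finset N) (W : ℕ → Finset N), Disjoint D X →
      (∀ j ∈ Finset.range t, W j ⊆ D) →
      (∀ e ∈ D, ((Finset.range t).filter fun j => e ∈ W j).card = m) →
      (m : ℝ) * (f (X ∪ D) - f X) + t * f X ≤ ∑ j ∈ Finset.range t, f (X ∪ W j) := by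
  intro D
  induction D using Finset.induction_on with
  | empty =>
    intro W _ hWs _
    have hz : ∀ j ∈ Finset.range t, f (X ∪ W j) = f X := fun j hj => by
      rw [Finset.subset_empty.1 (hWs j hj), Finset.union_empty]
    rw [Finset.sum_congr rfl hz, Finset.sum_const, Finset.card_range, Finset.union_empty]
    simp [nsmul_eq_mul]
  | @insert e D heD ih =>
    intro W hdisj hWs hcount
    have heX : e ∉ X := Finset.disjoint_left.1 hdisj (Finset.mem_insert_self e D)
    set W' : ℕ → Finset N := fun j => W j \ {e} with hW'def
    have hW'sub : ∀ j ∈ Finset.range t, W' j ⊆ D := by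
      intro j hj x hx
      rcases Finset.mem_sdiff.1 hx with ⟨hx1, hx2⟩
      rcases Finset.mem_insert.1 (hWs j hj hx1) with h | h
      · exact absurd h (by simpa using hx2)
      · exact h
    have hcount' : ∀ e' ∈ D, ((Finset.range t).filter fun j => e' ∈ W' j).card = m := by
      intro e' he'
      have hne : e' ≠ e := fun h => heD (h ▸ he')
      rw [← hcount e' (Finset.mem_insert_of_mem he')]
      congr 1
      apply Finset.filter_congr
      intro j _
      simp [hW'def, hne]
    have hIH := ih W' (Finset.disjoint_of_subset_left (Finset.subset_insert e D) hdisj)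
      hW'sub hcount'
    have hdiff : (m : ℝ) * (f (X ∪ insert e D) - f (X ∪ D)) ≤
        ∑ j ∈ Finset.range t, (f (X ∪ W j) - f (X ∪ W' j)) := by
      have hsplit : ∑ j ∈ Finset.range t, (f (X ∪ W j) - f (X ∪ W' j))
          = ∑ j ∈ (Finset.range t).filter (fun j => e ∈ W j),
              (f (X ∪ W j) - f (X ∪ W' j)) := by
        symm
        apply Finset.sum_subset (Finset.filter_subset _ _)
        intro j hj hj'
        have heW : e ∉ W j := by
          intro h
          exact hj' (Finset.mem_filter.2 ⟨hj, h⟩)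
        have : W' j = W j := by
          simp [hW'def, Finset.sdiff_eq_self_iff_disjoint, Finset.disjoint_singleton_right, heW]
        rw [this, sub_self]
      rw [hsplit]
      have hterm : ∀ j ∈ (Finset.range t).filter (fun j => e ∈ W j),
          f (X ∪ insert e D) - f (X ∪ D) ≤ f (X ∪ W j) - f (X ∪ W' j) := by
        intro j hj
        rcases Finset.mem_filter.1 hj with ⟨hjr, hje⟩
        have h1 : X ∪ W j = insert e (X ∪ W' j) := by
          ext x
          by_cases hxe : x = e
          · subst hxe; simp [hje]
          · simp [hW'def, Finset.mem_insert, hxe]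
        have h2 : X ∪ insert e D = insert e (X ∪ D) := by
          rw [Finset.union_insert]
        rw [h1, h2]
        exact stmt4_hsub' f hmono hsub (X ∪ W' j) (X ∪ D)
          (Finset.union_subset_union (Finset.Subset.refl X) (hW'sub j hjr)) e
      have hc := Finset.card_nsmul_le_sum _ _ _ hterm
      rw [hcount e (Finset.mem_insert_self e D)] at hc
      simpa [nsmul_eq_mul] using hc
    have hsum : ∑ j ∈ Finset.range t, f (X ∪ W j)
        = ∑ j ∈ Finset.range t, f (X ∪ W' j)
          + ∑ j ∈ Finset.range t, (f (X ∪ W j) - f (X ∪ W' j)) := by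
      rw [← Finset.sum_add_distrib]
      exact Finset.sum_congr rfl (fun j _ => by ring)
    linarith

lemma stmt4_lemB
    (hmono : ∀ X Y : Finset N, X ⊆ Y → f X ≤ f Y)
    (hsub : ∀ X Y : Finset N, X ⊆ Y → ∀ e ∉ Y,
      f (insert e Y) - f Y ≤ f (insert e X) - f X)
    (X : Finset N) (t : ℕ) (α : ℝ) (hα : 0 ≤ α) :
    ∀ (D : Finset N) (Λ : ℕ → Finset N), D ⊆ X →
      (∀ j ∈ Finset.range t, Λ j ⊆ D) →
      (∀ e ∈ D, (((Finset.range t).filter fun j => e ∈ Λ j).card : ℝ) ≤ α) →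
      ∑ j ∈ Finset.range t, (f X - f (X \ Λ j)) ≤ α * (f X - f (X \ D)) := by
  intro D
  induction D using Finset.induction_on with
  | empty =>
    intro Λ _ hΛs _
    have hz : ∀ j ∈ Finset.range t, f X - f (X \ Λ j) = 0 := fun j hj => by
      rw [Finset.subset_empty.1 (hΛs j hj), Finset.sdiff_empty]; ring
    rw [Finset.sum_congr rfl hz, Finset.sum_const, Finset.sdiff_empty]
    simp
  | @insert e D heD ih =>
    intro Λ hDX hΛs hcount
    have heX : e ∈ X := hDX (Finset.mem_insert_self e D)
    set Λ' : ℕ → Finset N := fun j => Λ j \ {e} with hΛ'def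
    have hΛ'sub : ∀ j ∈ Finset.range t, Λ' j ⊆ D := by
      intro j hj x hx
      rcases Finset.mem_sdiff.1 hx with ⟨hx1, hx2⟩
      rcases Finset.mem_insert.1 (hΛs j hj hx1) with h | h
      · exact absurd h (by simpa using hx2)
      · exact h
    have hcount' : ∀ e' ∈ D, (((Finset.range t).filter fun j => e' ∈ Λ' j).card : ℝ) ≤ α := by
      intro e' he'
      have hne : e' ≠ e := fun h => heD (h ▸ he')
      have : ((Finset.range t).filter fun j => e' ∈ Λ' j)
          = ((Finset.range t).filter fun j => e' ∈ Λ j) := by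
        apply Finset.filter_congr
        intro j _
        simp [hΛ'def, hne]
      rw [this]
      exact hcount e' (Finset.mem_insert_of_mem he')
    have hIH := ih Λ' ((Finset.subset_insert e D).trans hDX) hΛ'sub hcount'
    have hM : (0:ℝ) ≤ f (X \ D) - f (X \ insert e D) := by
      have := hmono (X \ insert e D) (X \ D)
        (Finset.sdiff_subset_sdiff (Finset.Subset.refl X) (Finset.subset_insert e D))
      linarith
    have hdiff : ∑ j ∈ Finset.range t, (f (X \ Λ' j) - f (X \ Λ j))
        ≤ α * (f (X \ D) - f (X \ insert e D)) := by
      have hsplit : ∑ j ∈ Finset.range t, (f (X \ Λ' j) - f (X \ Λ j))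
          = ∑ j ∈ (Finset.range t).filter (fun j => e ∈ Λ j),
              (f (X \ Λ' j) - f (X \ Λ j)) := by
        symm
        apply Finset.sum_subset (Finset.filter_subset _ _)
        intro j hj hj'
        have heΛ : e ∉ Λ j := by
          intro h
          exact hj' (Finset.mem_filter.2 ⟨hj, h⟩)
        have : Λ' j = Λ j := by
          simp [hΛ'def, Finset.sdiff_eq_self_iff_disjoint, Finset.disjoint_singleton_right, heΛ]
        rw [this, sub_self]
      rw [hsplit]
      have hterm : ∀ j ∈ (Finset.range t).filter (fun j => e ∈ Λ j),
          f (X \ Λ' j) - f (X \ Λ j) ≤ f (X \ D) - f (X \ insert e D) := by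
        intro j hj
        rcases Finset.mem_filter.1 hj with ⟨hjr, hje⟩
        have h1 : X \ Λ' j = insert e (X \ Λ j) := by
          ext x
          by_cases hxe : x = e
          · subst hxe; simp [hΛ'def, heX, hje]
          · simp [hΛ'def, Finset.mem_insert, hxe]
        have h2 : X \ D = insert e (X \ insert e D) := by
          ext x
          by_cases hxe : x = e
          · subst hxe; simp [heX, heD]
          · simp [Finset.mem_insert, hxe]
        rw [h1, h2]
        exact stmt4_hsub' f hmono hsub (X \ insert e D) (X \ Λ j)
          (Finset.sdiff_subset_sdiff (Finset.Subset.refl X) (hΛs j hjr)) e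
      have hc := Finset.sum_le_card_nsmul _ _ _ hterm
      have hcard := hcount e (Finset.mem_insert_self e D)
      calc ∑ j ∈ (Finset.range t).filter (fun j => e ∈ Λ j), (f (X \ Λ' j) - f (X \ Λ j))
          ≤ (((Finset.range t).filter (fun j => e ∈ Λ j)).card : ℝ)
              * (f (X \ D) - f (X \ insert e D)) := by
            simpa [nsmul_eq_mul] using hc
        _ ≤ α * (f (X \ D) - f (X \ insert e D)) :=
            mul_le_mul_of_nonneg_right hcard hM
    have hsum : ∑ j ∈ Finset.range t, (f X - f (X \ Λ j))
        = ∑ j ∈ Finset.range t, (f X - f (X \ Λ' j))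
          + ∑ j ∈ Finset.range t, (f (X \ Λ' j) - f (X \ Λ j)) := by
      rw [← Finset.sum_add_distrib]
      exact Finset.sum_congr rfl (fun j _ => by ring)
    linarith

end AuxSubmod

/-- Key inequality of the local-optimality lemma: under ε-approximate submodularity
and the stated covering conditions, the `(1+δ)`-approximate local optimality inequalities
imply `(k + 1/p + 2εr/(1−ε) + (1+ε)δr/(1−ε))·f X ≥ f(X ∪ C) + (k + 1/p − 1)·f(X ∩ C)`. -/
theorem stmt_4 {N : Type*} [DecidableEq N] (f fhat : Finset N → ℝ)
    (k : ℕ) (hk : 2 ≤ k) (p δ r ε : ℝ)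
    (hp : 1 ≤ p) (hδ : 0 < δ) (hr : 1 ≤ r) (hε0 : 0 ≤ ε) (hε1 : ε < 1)
    (hmono : ∀ X Y : Finset N, X ⊆ Y → f X ≤ f Y)
    (hsub : ∀ X Y : Finset N, X ⊆ Y → ∀ e ∉ Y,
      f (insert e Y) - f Y ≤ f (insert e X) - f X)
    (hempty : f ∅ = 0)
    (hnonneg : ∀ X : Finset N, 0 ≤ f X)
    (happrox : ∀ X : Finset N, (1 - ε) * f X ≤ fhat X ∧ fhat X ≤ (1 + ε) * f X)
    (X C : Finset N) (t m : ℕ) (hm : 1 ≤ m)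
    (W Λ : ℕ → Finset N) (ne : N → ℕ)
    (hW : ∀ j < t, W j ⊆ C \ X)
    (hΛ : ∀ j < t, Λ j ⊆ X \ C)
    (hWcount : ∀ e ∈ C \ X, ((Finset.range t).filter fun j => e ∈ W j).card = m)
    (hΛcount : ∀ e ∈ X \ C, ((Finset.range t).filter fun j => e ∈ Λ j).card = ne e)
    (hne : ∀ e ∈ X \ C, (ne e : ℝ) ≤ (k + 1 / p - 1) * m)
    (ht : (t : ℝ) ≤ r * m)
    (hloc : ∀ j < t, fhat ((X \ Λ j) ∪ W j) ≤ (1 + δ) * fhat X) :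
    f (X ∪ C) + (k + 1 / p - 1) * f (X ∩ C)
      ≤ (k + 1 / p + 2 * ε * r / (1 - ε) + (1 + ε) * δ * r / (1 - ε)) * f X := by
  classical
  have hε1' : (0:ℝ) < 1 - ε := by linarith
  have hp0 : (0:ℝ) < p := by linarith
  have hinvp : (0:ℝ) < 1 / p := by positivity
  set K : ℝ := (1 + δ) * (1 + ε) / (1 - ε) with hKdef
  have hK1 : 1 ≤ K := by
    rw [hKdef, le_div_iff₀ hε1']
    nlinarith
  set β : ℝ := (k : ℝ) + 1 / p - 1 with hβdef
  have hβ0 : (0:ℝ) ≤ β := by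
    have : (2:ℝ) ≤ (k:ℝ) := by exact_mod_cast hk
    rw [hβdef]; linarith
  have hm0 : (0:ℝ) < m := by exact_mod_cast hm
  set α : ℝ := β * m with hαdef
  have hα0 : (0:ℝ) ≤ α := by positivity
  -- per-j local optimality bound
  have hjbound : ∀ j ∈ Finset.range t, f ((X \ Λ j) ∪ W j) ≤ K * f X := by
    intro j hj
    rw [Finset.mem_range] at hj
    have h1 := (happrox ((X \ Λ j) ∪ W j)).1
    have h2 := (happrox X).2
    have h3 := hloc j hj
    rw [hKdef, div_mul_eq_mul_div, le_div_iff₀ hε1']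
    nlinarith [hnonneg X]
  have hS3 : ∑ j ∈ Finset.range t, f ((X \ Λ j) ∪ W j) ≤ t * (K * f X) := by
    calc ∑ j ∈ Finset.range t, f ((X \ Λ j) ∪ W j)
        ≤ ∑ _j ∈ Finset.range t, K * f X := Finset.sum_le_sum hjbound
      _ = t * (K * f X) := by
          rw [Finset.sum_const, Finset.card_range, nsmul_eq_mul]
  -- per-j submodularity exchange
  have hexch : ∀ j ∈ Finset.range t,
      f (X ∪ W j) + f (X \ Λ j) ≤ f ((X \ Λ j) ∪ W j) + f X := by
    intro j hj
    rw [Finset.mem_range] at hj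
    have hWX : ∀ x ∈ W j, x ∉ X := fun x hx => (Finset.mem_sdiff.1 (hW j hj hx)).2
    have h := stmt4_sub2 f hmono hsub ((X \ Λ j) ∪ W j) X
    have hu : ((X \ Λ j) ∪ W j) ∪ X = X ∪ W j := by
      ext x
      simp only [Finset.mem_union, Finset.mem_sdiff]
      tauto
    have hi : ((X \ Λ j) ∪ W j) ∩ X = X \ Λ j := by
      ext x
      simp only [Finset.mem_inter, Finset.mem_union, Finset.mem_sdiff]
      constructor
      · rintro ⟨h1 | h1, h2⟩
        · exact h1
        · exact absurd h2 (hWX x h1)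
      · exact fun h1 => ⟨Or.inl h1, h1.1⟩
    rw [hu, hi] at h
    linarith
  have hi' : (∑ j ∈ Finset.range t, f (X ∪ W j)) + (∑ j ∈ Finset.range t, f (X \ Λ j))
      ≤ (∑ j ∈ Finset.range t, f ((X \ Λ j) ∪ W j)) + t * f X := by
    have h := Finset.sum_le_sum hexch
    rw [Finset.sum_add_distrib, Finset.sum_add_distrib, Finset.sum_const,
      Finset.card_range, nsmul_eq_mul] at h
    linarith
  -- Lemma A
  have hA := stmt4_lemA f hmono hsub X t m (C \ X) W Finset.sdiff_disjoint
    (fun j hj => hW j (Finset.mem_range.1 hj)) hWcount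
  rw [Finset.union_sdiff_self_eq_union] at hA
  -- Lemma B
  have hBcount : ∀ e ∈ X \ C, (((Finset.range t).filter fun j => e ∈ Λ j).card : ℝ) ≤ α := by
    intro e he
    rw [hΛcount e he]
    calc ((ne e : ℝ)) ≤ (k + 1 / p - 1) * m := hne e he
      _ = α := by rw [hαdef, hβdef]
  have hB := stmt4_lemB f hmono hsub X t α hα0 (X \ C) Λ Finset.sdiff_subset
    (fun j hj => hΛ j (Finset.mem_range.1 hj)) hBcount
  rw [Finset.sdiff_sdiff_self_left] at hB
  rw [Finset.sum_sub_distrib, Finset.sum_const, Finset.card_range, nsmul_eq_mul] at hB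
  -- combine
  have h7 : (m:ℝ) * f (X ∪ C) + α * f (X ∩ C)
      ≤ (m:ℝ) * f X + α * f X + t * ((K - 1) * f X) := by
    ring_nf at hA hB hi' hS3 ⊢
    linarith [hA, hB, hi', hS3]
  have h6 : (t:ℝ) * ((K - 1) * f X) ≤ r * m * ((K - 1) * f X) := by
    apply mul_le_mul_of_nonneg_right ht
    have := hnonneg X
    nlinarith
  have h8 : f (X ∪ C) + β * f (X ∩ C) ≤ f X + β * f X + r * ((K - 1) * f X) := by
    have h7' : (m:ℝ) * (f (X ∪ C) + β * f (X ∩ C))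
        ≤ (m:ℝ) * (f X + β * f X + r * ((K - 1) * f X)) := by
      rw [hαdef] at h7
      have e1 : (m:ℝ) * (f (X ∪ C) + β * f (X ∩ C))
          = (m:ℝ) * f (X ∪ C) + β * (m:ℝ) * f (X ∩ C) := by ring
      have e2 : (m:ℝ) * (f X + β * f X + r * ((K - 1) * f X))
          = (m:ℝ) * f X + β * (m:ℝ) * f X + r * (m:ℝ) * ((K - 1) * f X) := by ring
      rw [e1, e2]
      have h6' : (t:ℝ) * ((K - 1) * f X) ≤ r * (m:ℝ) * ((K - 1) * f X) := by
        linarith [h6]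
      linarith [h7, h6']
    exact le_of_mul_le_mul_left h7' hm0
  have heq : f X + β * f X + r * ((K - 1) * f X)
      = (k + 1 / p + 2 * ε * r / (1 - ε) + (1 + ε) * δ * r / (1 - ε)) * f X := by
    rw [hKdef, hβdef]
    field_simp
    ring
  rw [hβdef] at h8
  linarith [h8, heq.symm.le, heq.le]
end

section
/- Under the assumptions of the previous lemma, if additionally f(C) = OPT and f is monotone with f(∅)=0, then (k + 1/p + 2εr/(1−ε) + (1+ε)δr/(1−ε)) · f(X) ≥ OPT. In particular, any (1+δ)-approximate p-local optimal solution X satisfies this approximation guarantee. -/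
set_option maxHeartbeats 1000000

open Finset

/-- Lifting pairwise-marginal submodularity to sets: adding a set `T` of fresh
elements to nested sets `A ⊆ B` decreases the difference. -/
private lemma aux_L0 {N : Type*} [DecidableEq N] (f : Finset N → ℝ)
    (hsub : ∀ X Y : Finset N, X ⊆ Y → ∀ e ∉ Y,
      f (insert e Y) - f Y ≤ f (insert e X) - f X)
    (A B : Finset N) (hAB : A ⊆ B) (T : Finset N) (hT : ∀ x ∈ T, x ∉ B) :
    f (B ∪ T) - f (A ∪ T) ≤ f B - f A := by
  induction T using Finset.induction_on with
  | empty => simp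
  | @insert e T' he ih =>
    have heB : e ∉ B := hT e (mem_insert_self e T')
    have hT' : ∀ x ∈ T', x ∉ B := fun x hx => hT x (mem_insert_of_mem hx)
    have heBT : e ∉ B ∪ T' := by simp [heB, he]
    have h := hsub (A ∪ T') (B ∪ T')
      (union_subset_union hAB (Finset.Subset.refl T')) e heBT
    have h1 := ih hT'
    have e1 : B ∪ insert e T' = insert e (B ∪ T') := by
      ext x; simp only [mem_union, mem_insert]; tauto
    have e2 : A ∪ insert e T' = insert e (A ∪ T') := by
      ext x; simp only [mem_union, mem_insert]; tauto
    rw [e1, e2]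
    linarith

private lemma aux_add {N : Type*} [DecidableEq N] (f : Finset N → ℝ)
    (hsub : ∀ X Y : Finset N, X ⊆ Y → ∀ e ∉ Y,
      f (insert e Y) - f Y ≤ f (insert e X) - f X)
    (X : Finset N) (t m : ℕ) :
    ∀ D : Finset N, (∀ x ∈ D, x ∉ X) →
      ∀ W : ℕ → Finset N, (∀ j < t, W j ⊆ D) →
      (∀ e ∈ D, ((Finset.range t).filter fun j => e ∈ W j).card = m) →
      (m : ℝ) * (f (X ∪ D) - f X) ≤ ∑ j ∈ Finset.range t, (f (X ∪ W j) - f X) := by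
  intro D
  induction D using Finset.induction_on with
  | empty =>
    intro _ W hW _
    have hz : ∀ j ∈ Finset.range t, f (X ∪ W j) - f X = 0 := by
      intro j hj
      have : W j = ∅ := subset_empty.mp (hW j (mem_range.mp hj))
      simp [this]
    rw [Finset.sum_congr rfl hz]
    simp
  | @insert e D' he ih =>
    intro hDX W hW hcount
    have heX : e ∉ X := hDX e (mem_insert_self _ _)
    have hD'X : ∀ x ∈ D', x ∉ X := fun x hx => hDX x (mem_insert_of_mem hx)
    set W' : ℕ → Finset N := fun j => W j \ {e} with hW'def
    have hW' : ∀ j < t, W' j ⊆ D' := by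
      intro j hj x hx
      simp only [hW'def, mem_sdiff, mem_singleton] at hx
      rcases mem_insert.mp (hW j hj hx.1) with h | h
      · exact absurd h hx.2
      · exact h
    have hcount' : ∀ e' ∈ D', ((Finset.range t).filter fun j => e' ∈ W' j).card = m := by
      intro e' he'
      have hne : e' ≠ e := fun h => he (h ▸ he')
      have hfe : ((Finset.range t).filter fun j => e' ∈ W' j)
          = ((Finset.range t).filter fun j => e' ∈ W j) := by
        apply filter_congr
        intro j _
        simp [hW'def, hne]
      rw [hfe]
      exact hcount e' (mem_insert_of_mem he')
    have ihW := ih hD'X W' hW' hcount'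
    set M : ℝ := f (X ∪ insert e D') - f (X ∪ D') with hM
    have hstep : ∀ j ∈ Finset.range t,
        (if e ∈ W j then M else 0) ≤ (f (X ∪ W j) - f X) - (f (X ∪ W' j) - f X) := by
      intro j hj
      by_cases hej : e ∈ W j
      · simp only [if_pos hej]
        have hWj : X ∪ W j = insert e (X ∪ W' j) := by
          ext x
          simp only [hW'def, mem_union, mem_insert, mem_sdiff, mem_singleton]
          constructor
          · rintro (hx | hx)
            · exact Or.inr (Or.inl hx)
            · by_cases hxe : x = e
              · exact Or.inl hxe
              · exact Or.inr (Or.inr ⟨hx, hxe⟩)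
          · rintro (rfl | hx | ⟨hx, _⟩)
            · exact Or.inr hej
            · exact Or.inl hx
            · exact Or.inr hx
        have hsubs : X ∪ W' j ⊆ X ∪ D' :=
          union_subset_union (Finset.Subset.refl X) (hW' j (mem_range.mp hj))
        have heY : e ∉ X ∪ D' := by simp [heX, he]
        have h := hsub (X ∪ W' j) (X ∪ D') hsubs e heY
        have e3 : X ∪ insert e D' = insert e (X ∪ D') := by
          ext x; simp only [mem_union, mem_insert]; tauto
        rw [hM, e3, hWj]
        linarith
      · simp only [if_neg hej]
        have hWW : W' j = W j := by
          ext x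
          simp only [hW'def, mem_sdiff, mem_singleton]
          constructor
          · exact fun h => h.1
          · intro h
            exact ⟨h, fun hx => hej (hx ▸ h)⟩
        rw [hWW]
        simp
    have hsum := Finset.sum_le_sum hstep
    have hsum2 : ∑ j ∈ Finset.range t, (if e ∈ W j then M else 0) = (m : ℝ) * M := by
      rw [← Finset.sum_filter, Finset.sum_const, hcount e (mem_insert_self _ _), nsmul_eq_mul]
    rw [hsum2, Finset.sum_sub_distrib] at hsum
    have hkey : (m : ℝ) * (f (X ∪ insert e D') - f X)
        = (m : ℝ) * M + (m : ℝ) * (f (X ∪ D') - f X) := by rw [hM]; ring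
    linarith

private lemma aux_remove {N : Type*} [DecidableEq N] (f : Finset N → ℝ)
    (hmono : ∀ X Y : Finset N, X ⊆ Y → f X ≤ f Y)
    (hsub : ∀ X Y : Finset N, X ⊆ Y → ∀ e ∉ Y,
      f (insert e Y) - f Y ≤ f (insert e X) - f X)
    (X : Finset N) (t : ℕ) (nbar : ℝ) (hnbar : 0 ≤ nbar) :
    ∀ D : Finset N, D ⊆ X →
      ∀ (Λ : ℕ → Finset N) (nE : N → ℕ),
      (∀ j < t, Λ j ⊆ D) →
      (∀ e ∈ D, ((Finset.range t).filter fun j => e ∈ Λ j).card = nE e) →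
      (∀ e ∈ D, (nE e : ℝ) ≤ nbar) →
      ∑ j ∈ Finset.range t, (f X - f (X \ Λ j)) ≤ nbar * (f X - f (X \ D)) := by
  intro D
  induction D using Finset.induction_on with
  | empty =>
    intro _ Λ nE hΛ _ _
    have hz : ∀ j ∈ Finset.range t, f X - f (X \ Λ j) = 0 := by
      intro j hj
      have : Λ j = ∅ := subset_empty.mp (hΛ j (mem_range.mp hj))
      simp [this]
    rw [Finset.sum_congr rfl hz]
    simp
  | @insert e D' he ih =>
    intro hDX Λ nE hΛ hcount hbound
    have heX : e ∈ X := hDX (mem_insert_self _ _)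
    have hD'X : D' ⊆ X := fun x hx => hDX (mem_insert_of_mem hx)
    set Λ' : ℕ → Finset N := fun j => Λ j \ {e} with hΛ'def
    have hΛ' : ∀ j < t, Λ' j ⊆ D' := by
      intro j hj x hx
      simp only [hΛ'def, mem_sdiff, mem_singleton] at hx
      rcases mem_insert.mp (hΛ j hj hx.1) with h | h
      · exact absurd h hx.2
      · exact h
    have hcount' : ∀ e' ∈ D', ((Finset.range t).filter fun j => e' ∈ Λ' j).card = nE e' := by
      intro e' he'
      have hne : e' ≠ e := fun h => he (h ▸ he')
      have hfe : ((Finset.range t).filter fun j => e' ∈ Λ' j)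
          = ((Finset.range t).filter fun j => e' ∈ Λ j) := by
        apply filter_congr
        intro j _
        simp [hΛ'def, hne]
      rw [hfe]
      exact hcount e' (mem_insert_of_mem he')
    have hbound' : ∀ e' ∈ D', (nE e' : ℝ) ≤ nbar :=
      fun e' he' => hbound e' (mem_insert_of_mem he')
    have ihΛ := ih hD'X Λ' nE hΛ' hcount' hbound'
    set M : ℝ := f (X \ D') - f (X \ insert e D') with hM
    have hM0 : 0 ≤ M := by
      have : X \ insert e D' ⊆ X \ D' :=
        sdiff_subset_sdiff (Finset.Subset.refl X) (subset_insert e D')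
      have := hmono _ _ this
      rw [hM]; linarith
    have hstep : ∀ j ∈ Finset.range t,
        (f X - f (X \ Λ j)) - (f X - f (X \ Λ' j)) ≤ (if e ∈ Λ j then M else 0) := by
      intro j hj
      by_cases hej : e ∈ Λ j
      · simp only [if_pos hej]
        have hXΛ : X \ Λ j = (X \ Λ' j).erase e := by
          ext x
          simp only [hΛ'def, mem_erase, mem_sdiff, mem_singleton]
          constructor
          · intro hx
            have hxe : x ≠ e := fun h => hx.2 (h ▸ hej)
            exact ⟨hxe, hx.1, fun h => hx.2 h.1⟩
          · rintro ⟨hxe, hx, hnx⟩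
            refine ⟨hx, fun hxl => hnx ⟨hxl, hxe⟩⟩
        have heY : e ∉ (X \ Λ' j).erase e := notMem_erase e _
        have hsubY : X \ insert e D' ⊆ (X \ Λ' j).erase e := by
          intro x hx
          simp only [mem_sdiff, mem_insert, not_or] at hx
          have hxΛ' : x ∉ Λ' j := fun h => hx.2.2 (hΛ' j (mem_range.mp hj) h)
          simp only [mem_erase, mem_sdiff]
          exact ⟨hx.2.1, hx.1, hxΛ'⟩
        have h := hsub (X \ insert e D') ((X \ Λ' j).erase e) hsubY e heY
        have e1 : insert e ((X \ Λ' j).erase e) = X \ Λ' j := by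
          apply Finset.insert_erase
          simp only [hΛ'def, mem_sdiff, mem_singleton]
          simp [heX]
        have e2 : insert e (X \ insert e D') = X \ D' := by
          ext x
          simp only [mem_insert, mem_sdiff, mem_insert, not_or]
          constructor
          · rintro (rfl | ⟨hx, _, hxD⟩)
            · exact ⟨heX, he⟩
            · exact ⟨hx, hxD⟩
          · intro ⟨hx, hxD⟩
            by_cases hxe : x = e
            · exact Or.inl hxe
            · exact Or.inr ⟨hx, hxe, hxD⟩
        rw [e1, e2] at h
        rw [hXΛ, hM]
        linarith
      · simp only [if_neg hej]
        have hWW : Λ' j = Λ j := by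
          ext x
          simp only [hΛ'def, mem_sdiff, mem_singleton]
          constructor
          · exact fun h => h.1
          · intro h
            exact ⟨h, fun hx => hej (hx ▸ h)⟩
        rw [hWW]
        simp
    have hsum := Finset.sum_le_sum hstep
    have hsum2 : ∑ j ∈ Finset.range t, (if e ∈ Λ j then M else 0) = (nE e : ℝ) * M := by
      rw [← Finset.sum_filter, Finset.sum_const, hcount e (mem_insert_self _ _), nsmul_eq_mul]
    rw [hsum2, Finset.sum_sub_distrib] at hsum
    have hnEM : (nE e : ℝ) * M ≤ nbar * M :=
      mul_le_mul_of_nonneg_right (hbound e (mem_insert_self _ _)) hM0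
    have hkey : nbar * (f X - f (X \ insert e D'))
        = nbar * (f X - f (X \ D')) + nbar * M := by rw [hM]; ring
    linarith

/-- Approximation guarantee of a `(1+δ)`-approximate `p`-local optimum: under the
assumptions of the key inequality lemma, if additionally `f C = OPT`, then
`(k + 1/p + 2εr/(1−ε) + (1+ε)δr/(1−ε))·f X ≥ OPT`. -/
theorem stmt_5 {N : Type*} [DecidableEq N] (f fhat : Finset N → ℝ)
    (k : ℕ) (hk : 2 ≤ k) (p δ r ε : ℝ)
    (hp : 1 ≤ p) (hδ : 0 < δ) (hr : 1 ≤ r) (hε0 : 0 ≤ ε) (hε1 : ε < 1)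
    (hmono : ∀ X Y : Finset N, X ⊆ Y → f X ≤ f Y)
    (hsub : ∀ X Y : Finset N, X ⊆ Y → ∀ e ∉ Y,
      f (insert e Y) - f Y ≤ f (insert e X) - f X)
    (hempty : f ∅ = 0)
    (hnonneg : ∀ X : Finset N, 0 ≤ f X)
    (happrox : ∀ X : Finset N, (1 - ε) * f X ≤ fhat X ∧ fhat X ≤ (1 + ε) * f X)
    (X C : Finset N) (t m : ℕ) (hm : 1 ≤ m)
    (W Λ : ℕ → Finset N) (ne : N → ℕ)
    (hW : ∀ j < t, W j ⊆ C \ X)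
    (hΛ : ∀ j < t, Λ j ⊆ X \ C)
    (hWcount : ∀ e ∈ C \ X, ((Finset.range t).filter fun j => e ∈ W j).card = m)
    (hΛcount : ∀ e ∈ X \ C, ((Finset.range t).filter fun j => e ∈ Λ j).card = ne e)
    (hne : ∀ e ∈ X \ C, (ne e : ℝ) ≤ (k + 1 / p - 1) * m)
    (ht : (t : ℝ) ≤ r * m)
    (hloc : ∀ j < t, fhat ((X \ Λ j) ∪ W j) ≤ (1 + δ) * fhat X)
    (OPT : ℝ) (hC : f C = OPT) :
    OPT ≤ (k + 1 / p + 2 * ε * r / (1 - ε) + (1 + ε) * δ * r / (1 - ε)) * f X := by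
  have h1ε : (0:ℝ) < 1 - ε := by linarith
  have hfX : 0 ≤ f X := hnonneg X
  have hmn : 0 < m := hm
  have hm0 : (0:ℝ) < (m:ℝ) := by exact_mod_cast hmn
  have hp0 : (0:ℝ) < p := lt_of_lt_of_le one_pos hp
  have h1p : (0:ℝ) < 1 / p := by positivity
  have hk2 : (2:ℝ) ≤ (k:ℝ) := by exact_mod_cast hk
  set nbar : ℝ := (k + 1 / p - 1) * m with hnbardef
  have hnbar : 0 ≤ nbar := by
    apply mul_nonneg
    · linarith
    · exact le_of_lt hm0
  -- Lemma 1: adding the W j's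
  have hAdd := aux_add f hsub X t m (C \ X)
    (fun x hx => (mem_sdiff.mp hx).2) W hW hWcount
  have hU : X ∪ (C \ X) = X ∪ C := by
    ext x; simp only [mem_union, mem_sdiff]; tauto
  rw [hU] at hAdd
  -- Lemma 2: removing the Λ j's
  have hRem := aux_remove f hmono hsub X t nbar hnbar (X \ C)
    (sdiff_subset) Λ ne hΛ hΛcount hne
  have hXC : X \ (X \ C) = X ∩ C := Finset.sdiff_sdiff_self_left X C
  rw [hXC] at hRem
  have hRem2 : ∑ j ∈ Finset.range t, (f X - f (X \ Λ j)) ≤ nbar * f X := by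
    have h0 : 0 ≤ f (X ∩ C) := hnonneg _
    have : nbar * (f X - f (X ∩ C)) ≤ nbar * f X :=
      mul_le_mul_of_nonneg_left (by linarith) hnbar
    linarith
  -- exchange inequality per j
  have hEx : ∀ j ∈ Finset.range t,
      f (X ∪ W j) - f ((X \ Λ j) ∪ W j) ≤ f X - f (X \ Λ j) := by
    intro j hj
    exact aux_L0 f hsub (X \ Λ j) X (sdiff_subset) (W j)
      (fun x hx => (mem_sdiff.mp (hW j (mem_range.mp hj) hx)).2)
  have hExSum := Finset.sum_le_sum hEx
  rw [Finset.sum_sub_distrib, Finset.sum_sub_distrib, Finset.sum_const,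
    Finset.card_range, nsmul_eq_mul] at hExSum
  -- local optimality per j
  have hLoc : ∀ j ∈ Finset.range t,
      (1 - ε) * f ((X \ Λ j) ∪ W j) ≤ (1 + δ) * ((1 + ε) * f X) := by
    intro j hj
    have ha1 := (happrox ((X \ Λ j) ∪ W j)).1
    have ha2 := (happrox X).2
    have hl := hloc j (mem_range.mp hj)
    have h2 : (1 + δ) * fhat X ≤ (1 + δ) * ((1 + ε) * f X) :=
      mul_le_mul_of_nonneg_left ha2 (by linarith)
    linarith
  have hLocSum := Finset.sum_le_sum hLoc
  rw [Finset.sum_const, Finset.card_range, nsmul_eq_mul, ← Finset.mul_sum] at hLocSum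
  rw [Finset.sum_sub_distrib, Finset.sum_const, Finset.card_range, nsmul_eq_mul] at hAdd
  rw [Finset.sum_sub_distrib, Finset.sum_const, Finset.card_range, nsmul_eq_mul] at hRem2
  -- abbreviations
  set a : ℝ := f X with ha
  set b : ℝ := f (X ∪ C) with hb
  set S1 : ℝ := ∑ j ∈ Finset.range t, f (X ∪ W j) with hS1
  set SY : ℝ := ∑ j ∈ Finset.range t, f ((X \ Λ j) ∪ W j) with hSY
  set SL : ℝ := ∑ j ∈ Finset.range t, f (X \ Λ j) with hSL
  set c : ℝ := 2 * ε + δ + δ * ε with hc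
  have hc0 : 0 ≤ c := by rw [hc]; nlinarith
  -- multiply the pieces by (1-ε)
  have hA2 : (1 - ε) * ((m:ℝ) * (b - a)) ≤ (1 - ε) * (S1 - (t:ℝ) * a) :=
    mul_le_mul_of_nonneg_left hAdd (le_of_lt h1ε)
  have hExRem : S1 - SY ≤ nbar * a := by
    linarith [hExSum, hRem2]
  have hB2 : (1 - ε) * (S1 - SY) ≤ (1 - ε) * (nbar * a) :=
    mul_le_mul_of_nonneg_left hExRem (le_of_lt h1ε)
  have hC2 : (t:ℝ) * (c * a) ≤ (r * (m:ℝ)) * (c * a) :=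
    mul_le_mul_of_nonneg_right ht (mul_nonneg hc0 hfX)
  have hid : (t:ℝ) * ((1 + δ) * ((1 + ε) * a))
      = (1 - ε) * ((t:ℝ) * a) + (t:ℝ) * (c * a) := by rw [hc]; ring
  have key1 : (1 - ε) * ((m:ℝ) * b)
      ≤ (1 - ε) * ((m:ℝ) * a) + (1 - ε) * (nbar * a) + (r * (m:ℝ)) * (c * a) := by
    linarith [hA2, hB2, hC2, hid, hLocSum]
  have hid2 : (1 - ε) * ((m:ℝ) * a) + (1 - ε) * (nbar * a) + (r * (m:ℝ)) * (c * a)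
      = (m:ℝ) * ((1 - ε) * ((k:ℝ) + 1 / p) * a + r * (c * a)) := by
    rw [hnbardef]; ring
  have hid3 : (1 - ε) * ((m:ℝ) * b) = (m:ℝ) * ((1 - ε) * b) := by ring
  have key1' : (m:ℝ) * ((1 - ε) * b)
      ≤ (m:ℝ) * ((1 - ε) * ((k:ℝ) + 1 / p) * a + r * (c * a)) := by
    rw [hid2] at key1
    rw [← hid3]
    exact key1
  have key2 : (1 - ε) * b ≤ (1 - ε) * ((k:ℝ) + 1 / p) * a + r * (c * a) :=
    le_of_mul_le_mul_left key1' hm0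
  have hOPT : OPT ≤ b := by
    rw [← hC, hb]
    exact hmono C (X ∪ C) Finset.subset_union_right
  have hKeq : (1 - ε) * (((k:ℝ) + 1 / p + 2 * ε * r / (1 - ε) + (1 + ε) * δ * r / (1 - ε)) * a)
      = (1 - ε) * ((k:ℝ) + 1 / p) * a + r * (c * a) := by
    rw [hc]; field_simp; ring
  have hfin : (1 - ε) * OPT
      ≤ (1 - ε) * (((k:ℝ) + 1 / p + 2 * ε * r / (1 - ε) + (1 + ε) * δ * r / (1 - ε)) * a) := by
    rw [hKeq]
    have h2 := mul_le_mul_of_nonneg_left hOPT (le_of_lt h1ε)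
    linarith [key2, h2]
  exact le_of_mul_le_mul_left hfin h1ε
end
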